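/- arXiv:2112.06983 — 4 statements merged into one kernel-verified Lean document; each statement's English description precedes it below -/
import Mathlib

section
/- Let m ≥ 1 be a natural number. In the formal power series ring in two variables a and t over ℚ, let F be the power series whose coefficient of a^n t^s equals P_m^n(s) for all n, s ∈ ℕ. Then F · ∏_{i=0}^{m} (1 − a·t^i) = 1; equivalently, ∏_{i=0}^{m} 1/(1 − a t^i) = Σ_{n=0}^∞ Σ_{s=0}^{mn} P_m^n(s) a^n t^s. -/
open Finset

/-- `W t d` : the number of tuples `x` of nonnegative integers with `∑ i, d i * x i = t`. -/
noncomputable def W (t : ℤ) (d : List ℕ) : ℕ :=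
  Nat.card {x : Fin d.length → ℕ // ∑ i, (d.get i : ℤ) * (x i : ℤ) = t}

/-- `Wm j t` : the restricted partition function `W(t, (1,2,…,j))`. -/
noncomputable def Wm (j : ℕ) (t : ℤ) : ℕ :=
  W t ((List.range j).map (· + 1))

/-- `P m n s` : the Gaussian polynomial coefficient, i.e. the number of tuples
`(x_1,…,x_m)` of nonnegative integers with `∑ i, i * x_i = s` and `∑ i, x_i ≤ n`. -/
noncomputable def P (m n s : ℕ) : ℕ :=
  Nat.card {x : Fin m → ℕ // (∑ i : Fin m, ((i : ℕ) + 1) * x i = s) ∧ ∑ i, x i ≤ n}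

/-- `tri j = j(j+1)/2`, the `j`-th triangular number. -/
def tri (j : ℕ) : ℕ := j * (j + 1) / 2

/-!
Splitting the tuples counted by `P (m + 1) n s` according to whether their last entry vanishes
gives `P (m + 1) n s = P m n s + P (m + 1) (n - 1) (s - (m + 1))` (the second term only for
`n ≥ 1`, `s ≥ m + 1`). Read on coefficients, this says that multiplying the generating function
of `P (m + 1)` by `1 - a t^(m + 1)` yields that of `P m`. Inducting down to `m = 0`, where
`P 0 n s = [s = 0]`, the remaining factor `1 - a` leaves `1`.
-/

lemma Pi.sub_single_add_single_of_ne_zero {ι : Type*} [DecidableEq ι] {x : ι → ℕ} {j : ι}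
    (hx : x j ≠ 0) : x - Pi.single j 1 + Pi.single j 1 = x := by
  funext i
  rcases eq_or_ne i j with rfl | hij
  · simp only [Pi.add_apply, Pi.sub_apply, Pi.single_eq_same]
    omega
  · simp [hij]

section WeightedSum

variable {m : ℕ}

lemma weighted_sum_succ (x : Fin (m + 1) → ℕ) :
    ∑ i : Fin (m + 1), ((i : ℕ) + 1) * x i
      = ∑ i : Fin m, ((i : ℕ) + 1) * x i.castSucc + (m + 1) * x (Fin.last m) := by
  simp [Fin.sum_univ_castSucc]

lemma weighted_sum_add_single (x : Fin m → ℕ) (j : Fin m) :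
    ∑ i : Fin m, ((i : ℕ) + 1) * (x + Pi.single j 1 : Fin m → ℕ) i
      = ∑ i : Fin m, ((i : ℕ) + 1) * x i + (j + 1) := by
  simp [mul_add, sum_add_distrib, Pi.single_apply]

lemma sum_add_single_one {ι : Type*} [Fintype ι] [DecidableEq ι] (x : ι → ℕ) (j : ι) :
    ∑ i, (x + Pi.single j 1 : ι → ℕ) i = ∑ i, x i + 1 := by
  simp [sum_add_distrib]

end WeightedSum

def GaussTuples (m n s : ℕ) : Type :=
  {x : Fin m → ℕ // (∑ i : Fin m, ((i : ℕ) + 1) * x i = s) ∧ ∑ i, x i ≤ n}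

namespace GaussTuples

variable {m n s : ℕ}

lemma card_eq_P : Nat.card (GaussTuples m n s) = P m n s := rfl

instance : Finite (GaussTuples m n s) :=
  Finite.of_injective (fun x i => (⟨x.1 i, Nat.lt_succ_of_le <|
      (single_le_sum (fun j _ => Nat.zero_le (x.1 j)) (mem_univ i)).trans x.2.2⟩ : Fin (n + 1)))
    fun _ _ h => Subtype.ext <| funext fun i => congrArg Fin.val (congrFun h i)

def lastEqZeroEquiv :
    {x : GaussTuples (m + 1) n s // x.1 (Fin.last m) = 0} ≃ GaussTuples m n s where
  toFun x := ⟨Fin.init x.1.1, by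
    have hs := x.1.2.1
    have hn := x.1.2.2
    rw [weighted_sum_succ, x.2] at hs
    rw [Fin.sum_univ_castSucc, x.2] at hn
    exact ⟨by simpa [Fin.init] using hs, by simpa [Fin.init] using hn⟩⟩
  invFun y :=
    ⟨⟨Fin.snoc y.1 0, by simpa [weighted_sum_succ, Fin.sum_univ_castSucc] using y.2⟩,
      Fin.snoc_last (α := fun _ => ℕ) 0 y.1⟩
  left_inv x := by
    apply Subtype.ext; apply Subtype.ext
    simpa only [x.2] using Fin.snoc_init_self x.1.1
  right_inv y := Subtype.ext (Fin.init_snoc (α := fun _ => ℕ) 0 y.1)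

def lastNeZeroEquiv :
    {x : GaussTuples (m + 1) (n + 1) (s + (m + 1)) // x.1 (Fin.last m) ≠ 0} ≃
      GaussTuples (m + 1) n s where
  toFun x := ⟨x.1.1 - Pi.single (Fin.last m) 1, by
    have hs := x.1.2.1
    have hn := x.1.2.2
    rw [← Pi.sub_single_add_single_of_ne_zero x.2, weighted_sum_add_single] at hs
    rw [← Pi.sub_single_add_single_of_ne_zero x.2, sum_add_single_one] at hn
    simp only [Fin.val_last] at hs
    omega⟩
  invFun y := ⟨⟨y.1 + Pi.single (Fin.last m) 1, by
    rw [weighted_sum_add_single, sum_add_single_one, Fin.val_last, y.2.1]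
    exact ⟨rfl, Nat.add_le_add_right y.2.2 1⟩⟩, by simp⟩
  left_inv x := Subtype.ext <| Subtype.ext <| Pi.sub_single_add_single_of_ne_zero x.2
  right_inv y := Subtype.ext (add_tsub_cancel_right _ _)

lemma isEmpty_lastNeZero (h : ¬(1 ≤ n ∧ m + 1 ≤ s)) :
    IsEmpty {x : GaussTuples (m + 1) n s // x.1 (Fin.last m) ≠ 0} := by
  refine ⟨fun x => h ⟨?_, ?_⟩⟩
  · exact (Nat.one_le_iff_ne_zero.2 x.2).trans
      ((single_le_sum (fun j _ => Nat.zero_le (x.1.1 j)) (mem_univ _)).trans x.1.2.2)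
  · have hs := x.1.2.1
    rw [weighted_sum_succ] at hs
    have := Nat.le_mul_of_pos_right (m + 1) (Nat.pos_of_ne_zero x.2)
    omega

end GaussTuples

lemma P_zero (n s : ℕ) : P 0 n s = if s = 0 then 1 else 0 := by
  by_cases hs : s = 0 <;> simp [P, hs, eq_comm]

lemma P_succ (m n s : ℕ) :
    P (m + 1) n s =
      P m n s + if 1 ≤ n ∧ m + 1 ≤ s then P (m + 1) (n - 1) (s - (m + 1)) else 0 := by
  let lastEqZero (x : GaussTuples (m + 1) n s) : Prop := x.1 (Fin.last m) = 0
  rw [← GaussTuples.card_eq_P, ← Nat.card_congr (Equiv.sumCompl lastEqZero), Nat.card_sum,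
    Nat.card_congr GaussTuples.lastEqZeroEquiv, GaussTuples.card_eq_P]
  split_ifs with h
  · obtain ⟨n, rfl⟩ := Nat.exists_eq_add_of_le' h.1
    obtain ⟨s, rfl⟩ := Nat.exists_eq_add_of_le' h.2
    rw [Nat.add_sub_cancel, Nat.add_sub_cancel, Nat.card_congr GaussTuples.lastNeZeroEquiv]
    rfl
  · have := GaussTuples.isEmpty_lastNeZero h
    rw [Nat.card_of_isEmpty]

open MvPowerSeries

section PowerSeries
variable {R : Type*} [CommRing R]

lemma Finsupp.single_zero_add_single_one_le_iff {a b n s : ℕ} :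
    (Finsupp.single 0 a + Finsupp.single 1 b : Fin 2 →₀ ℕ) ≤
        Finsupp.single 0 n + Finsupp.single 1 s ↔
      a ≤ n ∧ b ≤ s := by
  simp [Finsupp.le_def, Fin.forall_fin_two]

lemma Finsupp.single_zero_add_single_one_tsub {a b n s : ℕ} :
    (Finsupp.single 0 n + Finsupp.single 1 s : Fin 2 →₀ ℕ) -
        (Finsupp.single 0 a + Finsupp.single 1 b) =
      Finsupp.single 0 (n - a) + Finsupp.single 1 (s - b) := by
  ext i; fin_cases i <;> simp

lemma MvPowerSeries.ext_fin_two {F G : MvPowerSeries (Fin 2) R}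
    (h : ∀ n s : ℕ, coeff (Finsupp.single 0 n + Finsupp.single 1 s) F =
      coeff (Finsupp.single 0 n + Finsupp.single 1 s) G) : F = G := by
  refine MvPowerSeries.ext fun e => ?_
  have he : e = Finsupp.single 0 (e 0) + Finsupp.single 1 (e 1) := by
    ext i; fin_cases i <;> simp
  rw [he, h]

lemma MvPowerSeries.coeff_one_fin_two (n s : ℕ) :
    coeff (Finsupp.single 0 n + Finsupp.single 1 s) (1 : MvPowerSeries (Fin 2) R) =
      if n = 0 ∧ s = 0 then 1 else 0 := by
  simp [coeff_one, Finsupp.ext_iff, Fin.forall_fin_two]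

lemma MvPowerSeries.coeff_mul_one_sub_X_mul_X_pow (F : MvPowerSeries (Fin 2) R) (k n s : ℕ) :
    coeff (Finsupp.single 0 n + Finsupp.single 1 s) (F * (1 - X 0 * X 1 ^ k)) =
      coeff (Finsupp.single 0 n + Finsupp.single 1 s) F -
        if 1 ≤ n ∧ k ≤ s then
          coeff (Finsupp.single 0 (n - 1) + Finsupp.single 1 (s - k)) F
        else 0 := by
  rw [mul_sub, mul_one, map_sub, X_pow_eq, X, monomial_mul_monomial, one_mul, coeff_mul_monomial,
    Finsupp.single_zero_add_single_one_tsub, mul_one]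
  simp only [Finsupp.single_zero_add_single_one_le_iff]

end PowerSeries

theorem gaussian_generating_function_general (m : ℕ)
    (F : MvPowerSeries (Fin 2) ℚ)
    (hF : ∀ n s : ℕ,
      MvPowerSeries.coeff (Finsupp.single 0 n + Finsupp.single 1 s) F = (P m n s : ℚ)) :
    F * ∏ i ∈ Finset.range (m + 1),
      (1 - MvPowerSeries.X (0 : Fin 2) * (MvPowerSeries.X (1 : Fin 2)) ^ i) = 1 := by
  induction m generalizing F with
  | zero =>
    refine ext_fin_two fun n s => ?_
    rw [prod_range_one, coeff_mul_one_sub_X_mul_X_pow, coeff_one_fin_two]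
    simp only [hF, P_zero]
    by_cases hs : s = 0 <;> by_cases hn : n = 0 <;> simp [hs, hn, Nat.one_le_iff_ne_zero]
  | succ m ih =>
    rw [prod_range_succ, mul_comm _ (1 - _), ← mul_assoc]
    refine ih _ fun n s => ?_
    simp only [coeff_mul_one_sub_X_mul_X_pow, hF]
    rw [P_succ]
    split_ifs <;> simp

/-- the generating function identity
`∏_{i=0}^{m} 1/(1 − a t^i) = Σ_n Σ_s P_m^n(s) a^n t^s` in `MvPowerSeries (Fin 2) ℚ`,
where `X 0 = a` and `X 1 = t`. -/
theorem gaussian_generating_function (m : ℕ) (hm : 1 ≤ m)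
    (F : MvPowerSeries (Fin 2) ℚ)
    (hF : ∀ n s : ℕ,
      MvPowerSeries.coeff (Finsupp.single 0 n + Finsupp.single 1 s) F = (P m n s : ℚ)) :
    F * ∏ i ∈ Finset.range (m + 1),
      (1 - MvPowerSeries.X (0 : Fin 2) * (MvPowerSeries.X (1 : Fin 2)) ^ i) = 1 :=
  gaussian_generating_function_general m F hF
end

section
/- Let m ≥ 1. For all natural numbers n and s, the Gaussian polynomial coefficient admits the Sylvester–Cayley decomposition (as an identity in ℤ): P_m^n(s) = Σ_{i=1}^{m} (−1)^{m−i} · W( n·i − s − (m−i)(m−i+1)/2 , d^{(i)} ⧺ d^{(m−i)} ), where d^{(j)} denotes the sequence (1,2,…,j) (empty for j = 0) and W of a negative argument is 0. -/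
open Finset

open Function PowerSeries

/-!
Write `W(t, d)` as the `t`-th coefficient of `∏ᵢ 1/(1 - X^{dᵢ})`. Multiplying by `1 - X^a`
peels a factor off, `W(t, a :: d) - W(t - a, a :: d) = W(t, d)`, and a function on `ℤ` that
vanishes on negative arguments is determined by such a difference equation.

Put `S_m(α, t) = Σ_{i+j=m} (-1)^j W(α i + t - j(j+1)/2, d^{(i)} ⧺ d^{(j)})`, so that the
theorem reads `P_m^n(s) = S_m(n, -s)`. Peeling the factor `1/(1 - X^j)` of a summand gives
`S_{m+1}(α, t) - S_{m+1}(α + 1, t - m - 1) = -S_m(α + 1, t - m - 1)`, which for `α = n` is the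
Pascal rule `P_{m+1}^{n+1}(s) = P_m^{n+1}(s) + P_{m+1}^n(s - m - 1)` (split on whether the part
`m + 1` occurs). Peeling `1/(1 - X^i)` instead gives a difference equation in `α`; together the two
make `S_{m+1}(0, ·) - S_m(0, ·)` periodic of period `m + 1`, hence zero, so `S_m(0, t) = [t = 0]`
matches the boundary value `P_m^0(s) = [s = 0]`.
-/

theorem Nat.card_subtype_eq_ite {α : Type*} {p : α → Prop} (a : α) (q : Prop) [Decidable q]
    (h : ∀ x, p x ↔ x = a ∧ q) : Nat.card {x // p x} = if q then 1 else 0 := by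
  split_ifs <;> simp_all

theorem finite_of_forall_le {ι : Type*} [Fintype ι] {p : (ι → ℕ) → Prop} (N : ℕ)
    (h : ∀ x, p x → ∀ i, x i ≤ N) : Finite {x // p x} := by
  classical exact ((Set.finite_Iic fun _ => N).subset fun x hx => h x hx).to_subtype

theorem Nat.card_eq_card_insertNth_zero_add {n : ℕ} (i : Fin (n + 1))
    (p : (Fin (n + 1) → ℕ) → Prop) [Finite {x // p x}] :
    Nat.card {x // p x} =
      Nat.card {y : Fin n → ℕ // p (i.insertNth 0 y)} +
        Nat.card {x // p (x + Pi.single (M := fun _ => ℕ) i 1)} := by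
  classical
  let e₀ : {x // p x ∧ x i = 0} ≃ {y : Fin n → ℕ // p (i.insertNth 0 y)} :=
    { toFun := fun x => ⟨i.removeNth x.1, by
        simpa [← x.2.2, Fin.insertNth_self_removeNth] using x.2.1⟩
      invFun := fun y => ⟨i.insertNth 0 y.1, y.2, by simp⟩
      left_inv := fun x => by ext1; simp [← x.2.2]
      right_inv := fun y => by simp }
  have hle (x : {x // p x ∧ x i ≠ 0}) : Pi.single i 1 ≤ x.1 := fun j => by
    rcases eq_or_ne j i with rfl | hj
    · simpa [Nat.one_le_iff_ne_zero] using x.2.2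
    · simp [hj]
  let e₁ : {x // p x ∧ x i ≠ 0} ≃ {x // p (x + Pi.single (M := fun _ => ℕ) i 1)} :=
    { toFun := fun x => ⟨x.1 - Pi.single i 1, by
        simpa [tsub_add_cancel_of_le (hle x)] using x.2.1⟩
      invFun := fun x => ⟨x.1 + Pi.single i 1, x.2, by simp⟩
      left_inv := fun x => Subtype.ext (tsub_add_cancel_of_le (hle x))
      right_inv := fun x => by ext1; simp }
  let e : {x // p x} ≃ {y : Fin n → ℕ // p (i.insertNth 0 y)} ⊕
      {x // p (x + Pi.single (M := fun _ => ℕ) i 1)} :=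
    (Equiv.sumCompl fun x : {x // p x} => x.1 i = 0).symm.trans
      (((Equiv.subtypeSubtypeEquivSubtypeInter _ _).trans e₀).sumCongr
        ((Equiv.subtypeSubtypeEquivSubtypeInter _ _).trans e₁))
  have hfin := Finite.of_equiv _ e
  have := @Finite.sum_left _ _ hfin
  have := @Finite.sum_right _ _ hfin
  rw [Nat.card_congr e, Nat.card_sum]

theorem sum_mul_add_single_one {ι R : Type*} [Fintype ι] [DecidableEq ι] [CommSemiring R]
    (w : ι → R) (x : ι → ℕ) (i : ι) :
    ∑ j, w j * ((x + Pi.single (M := fun _ => ℕ) i 1) j : ℕ) = ∑ j, w j * x j + w i := by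
  simp [mul_add, sum_add_distrib, Pi.single_apply]

theorem Function.Periodic.eq_zero_of_forall_neg {M : Type*} [Zero M] {f : ℤ → M} {c : ℤ}
    (hf : Periodic f c) (hc : 0 < c) (h : ∀ t < 0, f t = 0) (t : ℤ) : f t = 0 := by
  rw [← hf.sub_nat_mul_eq (t.toNat + 1)]
  apply h
  push_cast
  nlinarith [Int.self_le_toNat t]

theorem W_of_neg {t : ℤ} (ht : t < 0) (d : List ℕ) : W t d = 0 := by
  rw [W, Nat.card_eq_zero]
  exact .inl ⟨fun ⟨x, hx⟩ => ht.not_ge (hx ▸ by positivity)⟩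

theorem W_nil (t : ℤ) : W t [] = if t = 0 then 1 else 0 :=
  Nat.card_subtype_eq_ite finZeroElim _ fun x => by
    simp [Subsingleton.elim x finZeroElim, eq_comm]

theorem finite_W {d : List ℕ} (hd : ∀ a ∈ d, 0 < a) (t : ℤ) :
    Finite {x : Fin d.length → ℕ // ∑ i, (d.get i : ℤ) * (x i : ℤ) = t} := by
  refine finite_of_forall_le t.toNat fun x hx i => ?_
  have hi : (x i : ℤ) ≤ d.get i * x i :=
    le_mul_of_one_le_left (by positivity) (by exact_mod_cast hd _ (List.get_mem _ _))
  have := single_le_sum (f := fun j => (d.get j : ℤ) * x j) (fun j _ => by positivity)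
    (mem_univ i)
  omega

theorem W_cons {a : ℕ} {d : List ℕ} (ha : 0 < a) (hd : ∀ b ∈ d, 0 < b) (t : ℤ) :
    W t (a :: d) = W (t - a) (a :: d) + W t d := by
  have := finite_W (d := a :: d) (by simpa [ha] using hd) t
  rw [W]
  refine (Nat.card_eq_card_insertNth_zero_add (n := d.length) 0 _).trans ?_
  rw [add_comm]
  congr 1
  · exact Nat.card_congr <| Equiv.subtypeEquivRight fun x => by
      rw [sum_mul_add_single_one, eq_sub_iff_add_eq]; rfl
  · exact Nat.card_congr <| Equiv.subtypeEquivRight fun y => by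
      simp [Fin.insertNth_zero', Fin.sum_univ_succ]

noncomputable def coeffZ {R : Type*} [Semiring R] (t : ℤ) : R⟦X⟧ →ₗ[R] R :=
  if 0 ≤ t then coeff t.toNat else 0

section coeffZ

variable {R : Type*} [Semiring R]

theorem coeffZ_of_neg {t : ℤ} (ht : t < 0) (F : R⟦X⟧) : coeffZ t F = 0 := by
  simp [coeffZ, ht.not_ge]

theorem coeffZ_one (t : ℤ) : coeffZ t (1 : R⟦X⟧) = if t = 0 then 1 else 0 := by
  rcases lt_or_ge t 0 with ht | ht
  · simp [coeffZ_of_neg ht, ht.ne]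
  · simp only [coeffZ, ht, if_true, coeff_one]
    exact if_congr (by omega) rfl rfl

theorem coeffZ_X_pow_mul (a : ℕ) (t : ℤ) (F : R⟦X⟧) :
    coeffZ t (X ^ a * F) = coeffZ (t - a) F := by
  rcases lt_or_ge t a with ht | ht
  · rcases lt_or_ge t 0 with ht0 | ht0
    · rw [coeffZ_of_neg ht0, coeffZ_of_neg (by omega)]
    · rw [coeffZ_of_neg (t := t - a) (by omega), coeffZ, if_pos ht0, coeff_X_pow_mul',
        if_neg (by omega)]
  · rw [coeffZ, coeffZ, if_pos (by omega), if_pos (by omega), coeff_X_pow_mul', if_pos (by omega)]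
    congr 2
    omega

end coeffZ

noncomputable def invOneSubXPow (a : ℕ) : ℤ⟦X⟧ := mk fun k => if a ∣ k then 1 else 0

theorem one_sub_X_pow_mul_invOneSubXPow {a : ℕ} (ha : a ≠ 0) :
    (1 - X ^ a) * invOneSubXPow a = 1 := by
  have : invOneSubXPow a = expand a ha (mk 1) := by
    ext k
    simp [invOneSubXPow, coeff_expand]
  rw [this, ← expand_X a ha, ← map_one (expand a ha), ← map_sub, ← map_mul, mul_comm,
    mk_one_mul_one_sub_eq_one, map_one]

theorem coeffZ_invOneSubXPow_mul_sub {a : ℕ} (ha : a ≠ 0) (F : ℤ⟦X⟧) {t t' : ℤ}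
    (h : t' = t - a) :
    coeffZ t (invOneSubXPow a * F) - coeffZ t' (invOneSubXPow a * F) = coeffZ t F := by
  subst h
  simpa only [sub_mul, one_mul, mul_assoc, map_sub, coeffZ_X_pow_mul] using
    congrArg (coeffZ t) (congrArg (· * F) (one_sub_X_pow_mul_invOneSubXPow ha))

noncomputable def wGenFun (d : List ℕ) : ℤ⟦X⟧ := (d.map invOneSubXPow).prod

theorem W_eq_coeffZ {d : List ℕ} (hd : ∀ a ∈ d, 0 < a) (t : ℤ) :
    (W t d : ℤ) = coeffZ t (wGenFun d) := by
  induction d generalizing t with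
  | nil => simp [W_nil, wGenFun, coeffZ_one]
  | cons a d ih =>
    obtain ⟨ha, hd⟩ := List.forall_mem_cons.mp hd
    suffices ∀ t, (W t (a :: d) : ℤ) - coeffZ t (wGenFun (a :: d)) = 0 by linarith [this t]
    refine Periodic.eq_zero_of_forall_neg (c := a) (fun t => ?_) (by exact_mod_cast ha)
      fun t ht => by simp [W_of_neg ht, coeffZ_of_neg ht]
    simp only [wGenFun, List.map_cons, List.prod_cons] at ih ⊢
    rw [W_cons ha hd, add_sub_cancel_right]
    push_cast
    rw [ih hd, ← coeffZ_invOneSubXPow_mul_sub ha.ne' _ (t := t + a)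
      (add_sub_cancel_right _ _).symm]
    ring

theorem tri_succ (j : ℕ) : tri (j + 1) = tri j + (j + 1) := by
  rw [tri, tri, show (j + 1) * (j + 1 + 1) = j * (j + 1) + (j + 1) * 2 by ring,
    Nat.add_mul_div_right _ _ two_pos]

noncomputable def invQPochhammer (j : ℕ) : ℤ⟦X⟧ := wGenFun ((List.range j).map (· + 1))

theorem invQPochhammer_zero : invQPochhammer 0 = 1 := rfl

theorem invQPochhammer_succ (j : ℕ) :
    invQPochhammer (j + 1) = invOneSubXPow (j + 1) * invQPochhammer j := by
  simp [invQPochhammer, wGenFun, List.range_succ, mul_comm]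

noncomputable def sylvesterSum (m : ℕ) (α t : ℤ) : ℤ :=
  ∑ p ∈ antidiagonal m,
    (-1) ^ p.2 * coeffZ (α * p.1 + t - tri p.2) (invQPochhammer p.1 * invQPochhammer p.2)

theorem sylvesterSum_zero (α t : ℤ) : sylvesterSum 0 α t = if t = 0 then 1 else 0 := by
  simp [sylvesterSum, tri, invQPochhammer_zero, coeffZ_one]

theorem sylvesterSum_of_neg (m : ℕ) {α t : ℤ} (hα : α ≤ 0) (ht : t < 0) :
    sylvesterSum m α t = 0 := by
  refine sum_eq_zero fun p _ => ?_
  rw [coeffZ_of_neg, mul_zero]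
  nlinarith [Int.natCast_nonneg p.1, Int.natCast_nonneg (tri p.2)]

theorem sylvesterSum_succ_sub_sub_one (m : ℕ) (α t : ℤ) :
    sylvesterSum (m + 1) α t - sylvesterSum (m + 1) (α - 1) t = sylvesterSum m α (t + α) := by
  simp only [sylvesterSum, Nat.sum_antidiagonal_succ]
  rw [add_sub_add_comm, ← sum_sub_distrib]
  simp only [Nat.cast_zero, mul_zero, sub_self, zero_add]
  refine sum_congr rfl fun p _ => ?_
  rw [← mul_sub, invQPochhammer_succ, mul_assoc,
    coeffZ_invOneSubXPow_mul_sub (Nat.succ_ne_zero _)]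
  · congr 3; push_cast; ring
  · push_cast; ring

theorem sylvesterSum_succ_sub_add_one (m : ℕ) (α t : ℤ) :
    sylvesterSum (m + 1) α t - sylvesterSum (m + 1) (α + 1) (t - (m + 1)) =
      -sylvesterSum m (α + 1) (t - (m + 1)) := by
  simp only [sylvesterSum, Nat.sum_antidiagonal_succ']
  rw [add_sub_add_comm, ← sum_sub_distrib, ← sum_neg_distrib]
  refine (congrArg₂ (· + ·) ?_ (sum_congr rfl fun p hp => ?_)).trans (zero_add _)
  · push_cast; ring_nf
  obtain rfl := HasAntidiagonal.mem_antidiagonal.mp hp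
  rw [← mul_sub, invQPochhammer_succ, mul_left_comm,
    coeffZ_invOneSubXPow_mul_sub (Nat.succ_ne_zero _)]
  · rw [tri_succ, pow_succ]; push_cast; ring_nf
  · rw [tri_succ]; push_cast; ring

theorem sylvesterSum_zero_slope (m : ℕ) (t : ℤ) :
    sylvesterSum m 0 t = if t = 0 then 1 else 0 := by
  induction m generalizing t with
  | zero => exact sylvesterSum_zero 0 t
  | succ m ih =>
    suffices ∀ t, sylvesterSum (m + 1) 0 t - sylvesterSum m 0 t = 0 by
      rw [← ih t]; linarith [this t]
    refine Periodic.eq_zero_of_forall_neg (c := m + 1) (fun t => ?_) (by positivity) fun t ht => by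
      rw [sylvesterSum_of_neg _ le_rfl ht, sylvesterSum_of_neg _ le_rfl ht, sub_zero]
    have hL := sylvesterSum_succ_sub_sub_one m 0 (t + (m + 1))
    have hR := sylvesterSum_succ_sub_add_one m (-1) (t + (m + 1))
    simp only [zero_sub, neg_add_cancel, add_zero, add_sub_cancel_right] at hL hR
    linarith

-- `P` with an integer weight `s`, so that the Pascal rule can shift `s` below zero.
noncomputable def PInt (m n : ℕ) (s : ℤ) : ℕ :=
  Nat.card {x : Fin m → ℕ //
    ∑ i : Fin m, ((i : ℕ) + 1 : ℤ) * x i = s ∧ ∑ i, x i ≤ n}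

theorem P_eq_PInt (m n s : ℕ) : P m n s = PInt m n s := by
  unfold P PInt
  exact Nat.card_congr <| Equiv.subtypeEquivRight fun x => by
    rw [← Nat.cast_inj (R := ℤ)]
    push_cast
    rfl

theorem PInt_zero_left (n : ℕ) (s : ℤ) : PInt 0 n s = if s = 0 then 1 else 0 := by
  unfold PInt
  exact Nat.card_subtype_eq_ite finZeroElim _ fun x => by
    simp [Subsingleton.elim x finZeroElim, eq_comm]

theorem PInt_zero_right (m : ℕ) (s : ℤ) : PInt m 0 s = if s = 0 then 1 else 0 := by
  unfold PInt
  exact Nat.card_subtype_eq_ite 0 _ fun x => by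
    have : ∑ i, x i ≤ 0 ↔ x = 0 := by simp [funext_iff]
    rw [this]
    constructor <;> rintro ⟨rfl, rfl⟩ <;> simp

theorem PInt_succ_succ (m n : ℕ) (s : ℤ) :
    PInt (m + 1) (n + 1) s = PInt m (n + 1) s + PInt (m + 1) n (s - (m + 1)) := by
  have : Finite {x : Fin (m + 1) → ℕ //
      ∑ i : Fin (m + 1), ((i : ℕ) + 1 : ℤ) * x i = s ∧ ∑ i, x i ≤ n + 1} :=
    finite_of_forall_le (n + 1) fun x hx i =>
      (single_le_sum (fun j _ => Nat.zero_le (x j)) (mem_univ i)).trans hx.2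
  rw [PInt, Nat.card_eq_card_insertNth_zero_add (Fin.last m)]
  congr 1
  · exact Nat.card_congr <| Equiv.subtypeEquivRight fun y => by
      simp [Fin.insertNth_last', Fin.sum_univ_castSucc]
  · exact Nat.card_congr <| Equiv.subtypeEquivRight fun x => by
      rw [sum_mul_add_single_one]
      simp [sum_add_distrib]
      omega

theorem PInt_eq_sylvesterSum (m n : ℕ) (s : ℤ) :
    (PInt m n s : ℤ) = sylvesterSum m n (-s) := by
  induction n generalizing m s with
  | zero => simp [PInt_zero_right, sylvesterSum_zero_slope]
  | succ n ihn =>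
    induction m generalizing s with
    | zero => simp [PInt_zero_left, sylvesterSum_zero]
    | succ m ihm =>
      have := sylvesterSum_succ_sub_add_one m n (-s + (m + 1))
      rw [add_sub_cancel_right, neg_add_eq_sub] at this
      rw [PInt_succ_succ, Nat.cast_add, ihm, ihn, neg_sub]
      push_cast at this ⊢
      linarith

theorem W_range_append_eq_coeffZ (i j : ℕ) (t : ℤ) :
    (W t (((List.range i).map (· + 1)) ++ ((List.range j).map (· + 1))) : ℤ) =
      coeffZ t (invQPochhammer i * invQPochhammer j) := by
  rw [W_eq_coeffZ (by simp; omega), invQPochhammer, invQPochhammer, wGenFun, wGenFun, wGenFun,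
    List.map_append, List.prod_append]

/-- Sylvester–Cayley decomposition of the Gaussian polynomial coefficient:
`P_m^n(s) = Σ_{i=1}^{m} (−1)^{m−i} W(n i − s − (m−i)(m−i+1)/2, d^{(i)} ⧺ d^{(m−i)})`. -/
theorem gaussian_sylvester_cayley (m : ℕ) (hm : 1 ≤ m) (n s : ℕ) :
    (P m n s : ℤ) =
      ∑ i ∈ Finset.Icc 1 m, (-1 : ℤ) ^ (m - i) *
        (W ((n : ℤ) * (i : ℤ) - (s : ℤ) - (tri (m - i) : ℤ))
          (((List.range i).map (· + 1)) ++ ((List.range (m - i)).map (· + 1))) : ℤ) := by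
  rw [P_eq_PInt, PInt_eq_sylvesterSum, sylvesterSum,
    Nat.sum_antidiagonal_eq_sum_range_succ_mk, sum_range_succ']
  have htri : 1 ≤ tri m := by
    obtain ⟨k, rfl⟩ := Nat.exists_eq_add_of_le' hm
    rw [tri_succ]
    omega
  rw [coeffZ_of_neg (by simp only [Nat.sub_zero]; push_cast; omega), mul_zero, add_zero,
    ← Ico_add_one_right_eq_Icc, sum_Ico_eq_sum_range, Nat.add_sub_cancel]
  refine sum_congr rfl fun k _ => ?_
  rw [add_comm 1 k, W_range_append_eq_coeffZ]
  congr 3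
end

section
/- Define the real functions w₃(x) = 47/72 + x/2 + x²/12 + (1/8)cos(πx) + (2/9)cos(2πx/3) and Σ₂(x) = (x+1)(x+3)/4 + (1 + cos(πx))/8. Then for all natural numbers n and s (with s ≤ 3n): (i) if 0 ≤ s ≤ n then P_3^n(s) = w₃(s); (ii) if n ≤ s ≤ 2n then P_3^n(s) = w₃(3n − s) − Σ₂(2n − s − 1); (iii) if 2n ≤ s ≤ 3n then P_3^n(s) = w₃(3n − s). (All identities of real numbers, with the integer count P_3^n(s) cast to ℝ.) -/
open Finset

/-- The quasipolynomial `w₃(x) = 47/72 + x/2 + x²/12 + (1/8)cos(πx) + (2/9)cos(2πx/3)`. -/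
noncomputable def w3 (x : ℝ) : ℝ :=
  47 / 72 + x / 2 + x ^ 2 / 12 + (1 / 8) * Real.cos (Real.pi * x)
    + (2 / 9) * Real.cos (2 * Real.pi * x / 3)

/-- The partial sum `Σ₂(x) = (x+1)(x+3)/4 + (1 + cos(πx))/8`. -/
noncomputable def Sigma2 (x : ℝ) : ℝ :=
  (x + 1) * (x + 3) / 4 + (1 + Real.cos (Real.pi * x)) / 8


noncomputable def Cpq (p q t : ℕ) : ℕ := Nat.card {x : ℕ × ℕ // p * x.1 + q * x.2 ≤ t}

lemma finite_pairs (P : ℕ × ℕ → Prop) (B : ℕ) (h : ∀ x, P x → x.1 ≤ B ∧ x.2 ≤ B) :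
    Finite {x : ℕ × ℕ // P x} := by
  have hb : ∀ x : {x : ℕ × ℕ // P x}, x.1.1 ≤ B ∧ x.1.2 ≤ B := fun x => h x.1 x.2
  apply Finite.of_injective (fun x : {x : ℕ × ℕ // P x} =>
    ((⟨x.1.1, Nat.lt_succ_of_le (hb x).1⟩ : Fin (B + 1)),
     (⟨x.1.2, Nat.lt_succ_of_le (hb x).2⟩ : Fin (B + 1))))
  rintro ⟨⟨a, b⟩, ha⟩ ⟨⟨c, d⟩, hc⟩ hxy
  simp only [Prod.mk.injEq, Fin.mk.injEq] at hxy
  exact Subtype.ext (by simp [hxy.1, hxy.2])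

lemma card_single (p t : ℕ) (hp : 0 < p) : Nat.card {b : ℕ // p * b ≤ t} = t / p + 1 := by
  have e : {b : ℕ // p * b ≤ t} ≃ Fin (t / p + 1) :=
    { toFun := fun b => ⟨b.1, Nat.lt_succ_of_le ((Nat.le_div_iff_mul_le hp).2
        (by rw [mul_comm]; exact b.2))⟩
      invFun := fun i => ⟨i.1, by
        have h1 : i.1 ≤ t / p := Nat.lt_succ_iff.1 i.2
        have h2 := (Nat.le_div_iff_mul_le hp).1 h1
        rw [mul_comm]; exact h2⟩
      left_inv := fun b => rfl
      right_inv := fun i => rfl }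
  rw [Nat.card_congr e, Nat.card_eq_fintype_card, Fintype.card_fin]

lemma finite_single (p t : ℕ) (hp : 0 < p) : Finite {b : ℕ // p * b ≤ t} := by
  apply Finite.of_injective (fun b : {b : ℕ // p * b ≤ t} =>
    (⟨b.1, by have h1 := Nat.le_mul_of_pos_left b.1 hp; have := b.2; omega⟩ : Fin (t + 1)))
  intro a b h
  exact Subtype.ext (by simpa [Fin.ext_iff] using h)

lemma Cpq_small (p q t : ℕ) (hp : 0 < p) (ht : t < q) : Cpq p q t = t / p + 1 := by
  rw [Cpq, ← card_single p t hp]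
  apply Nat.card_congr
  refine ⟨fun x => ⟨x.1.1, le_trans (Nat.le_add_right _ _) x.2⟩,
    fun b => ⟨(b.1, 0), by simpa using b.2⟩, ?_, fun b => rfl⟩
  rintro ⟨⟨a, b⟩, hab⟩
  have hab' : p * a + q * b ≤ t := hab
  have hb : b = 0 := by
    by_contra hb
    have : q ≤ q * b := Nat.le_mul_of_pos_right q (Nat.pos_of_ne_zero hb)
    omega
  subst hb; rfl

lemma Cpq_step (p q t : ℕ) (hp : 0 < p) (hq : 0 < q) :
    Cpq p q (t + q) = Cpq p q t + ((t + q) / p + 1) := by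
  haveI : Finite {x : ℕ × ℕ // p * x.1 + q * x.2 ≤ t} := by
    apply finite_pairs _ t
    intro x hx
    have h1 : x.1 ≤ p * x.1 := Nat.le_mul_of_pos_left _ hp
    have h2 : x.2 ≤ q * x.2 := Nat.le_mul_of_pos_left _ hq
    omega
  haveI : Finite {b : ℕ // p * b ≤ t + q} := finite_single p (t + q) hp
  have e : {x : ℕ × ℕ // p * x.1 + q * x.2 ≤ t + q} ≃
      {x : ℕ × ℕ // p * x.1 + q * x.2 ≤ t} ⊕ {b : ℕ // p * b ≤ t + q} :=
    { toFun := fun x =>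
        if h : x.1.2 = 0 then Sum.inr ⟨x.1.1, by have := x.2; rw [h] at this; simpa using this⟩
        else Sum.inl ⟨(x.1.1, x.1.2 - 1), by
          show p * x.1.1 + q * (x.1.2 - 1) ≤ t
          have h1 : p * x.1.1 + q * x.1.2 ≤ t + q := x.2
          have h2 : q * (x.1.2 - 1) + q = q * x.1.2 := by
            have h3 : x.1.2 - 1 + 1 = x.1.2 := Nat.succ_pred_eq_of_pos (Nat.pos_of_ne_zero h)
            calc q * (x.1.2 - 1) + q = q * (x.1.2 - 1 + 1) := by ring
              _ = q * x.1.2 := by rw [h3]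
          omega⟩
      invFun := fun y => match y with
        | Sum.inl x => ⟨(x.1.1, x.1.2 + 1), by
            show p * x.1.1 + q * (x.1.2 + 1) ≤ t + q
            have h1 : p * x.1.1 + q * x.1.2 ≤ t := x.2
            have h2 : q * (x.1.2 + 1) = q * x.1.2 + q := by ring
            omega⟩
        | Sum.inr b => ⟨(b.1, 0), by simpa using b.2⟩
      left_inv := by
        rintro ⟨⟨a, b⟩, hab⟩
        cases b with
        | zero => rfl
        | succ b => rfl
      right_inv := by
        rintro (⟨⟨a, b⟩, hab⟩ | ⟨b, hb⟩) <;> rfl }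
  rw [Cpq, Nat.card_congr e, Nat.card_sum, ← Cpq, card_single p (t + q) hp]

lemma C12_closed : ∀ t, Cpq 1 2 t = (t + 2) ^ 2 / 4 := by
  intro t
  induction t using Nat.strong_induction_on with
  | _ t ih =>
    match t with
    | 0 => rw [Cpq_small 1 2 0 (by norm_num) (by norm_num)]; norm_num
    | 1 => rw [Cpq_small 1 2 1 (by norm_num) (by norm_num)]; norm_num
    | (u + 2) =>
      rw [Cpq_step 1 2 u (by norm_num) (by norm_num), ih u (by omega)]
      have h : (u + 2 + 2) ^ 2 = (u + 2) ^ 2 + (4 * u + 12) := by ring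
      omega

lemma C23_closed : ∀ s, Cpq 2 3 s = ((s + 3) ^ 2 + 3) / 12 := by
  intro s
  induction s using Nat.strong_induction_on with
  | _ s ih =>
    match s with
    | 0 => rw [Cpq_small 2 3 0 (by norm_num) (by norm_num)]; norm_num
    | 1 => rw [Cpq_small 2 3 1 (by norm_num) (by norm_num)]; norm_num
    | 2 => rw [Cpq_small 2 3 2 (by norm_num) (by norm_num)]; norm_num
    | (u + 3) =>
      rw [Cpq_step 2 3 u (by norm_num) (by norm_num), ih u (by omega)]
      obtain ⟨k, r, hr, rfl⟩ : ∃ k r, r < 6 ∧ u = 6 * k + r := ⟨u / 6, u % 6, by omega, by omega⟩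
      obtain ⟨K, hK⟩ : ∃ K, K = k * k := ⟨_, rfl⟩
      have h1 : (6 * k + r + 3 + 3) ^ 2 + 3 = 36 * K + 12 * (r + 6) * k + (r + 6) * (r + 6) + 3 := by
        rw [hK]; ring
      have h2 : (6 * k + r + 3) ^ 2 + 3 = 36 * K + 12 * (r + 3) * k + (r + 3) * (r + 3) + 3 := by
        rw [hK]; ring
      interval_cases r <;> omega

noncomputable def Q (n s : ℕ) : ℕ :=
  Nat.card {x : ℕ × ℕ // 2 * x.1 + 3 * x.2 ≤ s ∧ s ≤ n + x.1 + 2 * x.2}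

lemma P_eq (n s : ℕ) : P 3 n s = Q n s := by
  rw [P, Q]
  apply Nat.card_congr
  refine ⟨fun x => ⟨(x.1 1, x.1 2), ?_⟩,
    fun y => ⟨![s - 2 * y.1.1 - 3 * y.1.2, y.1.1, y.1.2], ?_⟩, ?_, ?_⟩
  · obtain ⟨h1, h2⟩ := x.2
    simp only [Fin.sum_univ_three, Fin.val_zero, Fin.val_one, Fin.val_two] at h1 h2
    constructor <;> omega
  · obtain ⟨h1, h2⟩ := y.2
    simp only [Fin.sum_univ_three, Fin.val_zero, Fin.val_one, Fin.val_two,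
      Matrix.cons_val_zero, Matrix.cons_val_one, Matrix.head_cons, Matrix.cons_val_two,
      Matrix.tail_cons]
    constructor <;> omega
  · rintro ⟨x, h1, h2⟩
    simp only [Fin.sum_univ_three, Fin.val_zero, Fin.val_one, Fin.val_two] at h1 h2
    apply Subtype.ext
    have h0 : s - 2 * x 1 - 3 * x 2 = x 0 := by omega
    dsimp only
    rw [h0]
    funext i
    fin_cases i <;> rfl
  · rintro ⟨⟨b, c⟩, hy⟩
    apply Subtype.ext
    simp

lemma Q_low (n s : ℕ) (h : s ≤ n) : Q n s = Cpq 2 3 s := by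
  rw [Q, Cpq]
  apply Nat.card_congr
  apply Equiv.subtypeEquivRight
  intro x
  constructor
  · intro hx; omega
  · intro hx; omega

lemma Q_mid (n s : ℕ) (h1 : n < s) (h2 : s ≤ 2 * n) :
    Cpq 2 3 s = Q n s + Cpq 1 2 (s - n - 1) := by
  haveI : Finite {x : ℕ × ℕ // 2 * x.1 + 3 * x.2 ≤ s ∧ s ≤ n + x.1 + 2 * x.2} :=
    finite_pairs _ s (by intro x hx; omega)
  haveI : Finite {x : ℕ × ℕ // 2 * x.1 + 3 * x.2 ≤ s ∧ ¬ s ≤ n + x.1 + 2 * x.2} :=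
    finite_pairs _ s (by intro x hx; omega)
  have e : {x : ℕ × ℕ // 2 * x.1 + 3 * x.2 ≤ s} ≃
      {x : ℕ × ℕ // 2 * x.1 + 3 * x.2 ≤ s ∧ s ≤ n + x.1 + 2 * x.2} ⊕
      {x : ℕ × ℕ // 2 * x.1 + 3 * x.2 ≤ s ∧ ¬ s ≤ n + x.1 + 2 * x.2} :=
    { toFun := fun x =>
        if h : s ≤ n + x.1.1 + 2 * x.1.2 then Sum.inl ⟨x.1, x.2, h⟩ else Sum.inr ⟨x.1, x.2, h⟩
      invFun := fun y => match y with
        | Sum.inl x => ⟨x.1, x.2.1⟩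
        | Sum.inr x => ⟨x.1, x.2.1⟩
      left_inv := by
        rintro ⟨x, hx⟩
        dsimp only
        split_ifs <;> rfl
      right_inv := by
        rintro (⟨x, hx1, hx2⟩ | ⟨x, hx1, hx2⟩) <;> dsimp only
        · rw [dif_pos hx2]
        · rw [dif_neg hx2] }
  rw [Cpq, Nat.card_congr e, Nat.card_sum]
  congr 1
  rw [Cpq]
  apply Nat.card_congr
  apply Equiv.subtypeEquivRight
  intro x
  constructor
  · intro hx; omega
  · intro hx; omega

lemma Q_symm (n s : ℕ) (h : s ≤ 3 * n) : Q n s = Q n (3 * n - s) := by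
  rw [Q, Q]
  apply Nat.card_congr
  refine ⟨fun x => ⟨(s - 2 * x.1.1 - 3 * x.1.2, n + x.1.1 + 2 * x.1.2 - s), ?_⟩,
    fun y => ⟨(3 * n - s - 2 * y.1.1 - 3 * y.1.2, n + y.1.1 + 2 * y.1.2 - (3 * n - s)), ?_⟩,
    ?_, ?_⟩
  · obtain ⟨h1, h2⟩ := x.2
    constructor <;> omega
  · obtain ⟨h1, h2⟩ := y.2
    constructor <;> omega
  · rintro ⟨⟨a, b⟩, h1, h2⟩
    apply Subtype.ext
    simp only [Prod.mk.injEq]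
    constructor <;> omega
  · rintro ⟨⟨a, b⟩, h1, h2⟩
    apply Subtype.ext
    simp only [Prod.mk.injEq]
    constructor <;> omega

lemma cosnat (m : ℕ) : Real.cos (Real.pi * m) = (-1) ^ m := by
  rw [mul_comm]
  simpa using Real.cos_nat_mul_pi_sub 0 m

lemma sinnat (m : ℕ) : Real.sin (Real.pi * m) = 0 := by
  rw [mul_comm]; exact Real.sin_nat_mul_pi m

lemma Sigma2_neg_one : Sigma2 (-1) = 0 := by
  rw [Sigma2, show Real.pi * (-1) = -Real.pi by ring, Real.cos_neg, Real.cos_pi]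
  ring

lemma w3_nat (s : ℕ) : ((((s + 3) ^ 2 + 3) / 12 : ℕ) : ℝ) = w3 s := by
  obtain ⟨k, r, hr, rfl⟩ : ∃ k r, r < 6 ∧ s = 6 * k + r := ⟨s / 6, s % 6, by omega, by omega⟩
  have hc1 : Real.cos (Real.pi * ((6 * k + r : ℕ) : ℝ)) = (-1) ^ r := by
    rw [cosnat, pow_add, pow_mul]
    norm_num
  have hc2 : Real.cos (2 * Real.pi * ((6 * k + r : ℕ) : ℝ) / 3) = Real.cos (2 * Real.pi * r / 3) := by
    have h : 2 * Real.pi * ((6 * k + r : ℕ) : ℝ) / 3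
        = 2 * Real.pi * (r : ℝ) / 3 + (2 * k : ℤ) * (2 * Real.pi) := by push_cast; ring
    rw [h, Real.cos_add_int_mul_two_pi]
  rw [w3, hc1, hc2]
  interval_cases r
  · rw [show (6 * k + 0 + 3) ^ 2 + 3 = 12 * (3 * k ^ 2 + 3 * k + 1) + 0 by ring,
      Nat.mul_add_div (by norm_num)]
    rw [show 2 * Real.pi * ((0 : ℕ) : ℝ) / 3 = 0 by push_cast; ring, Real.cos_zero]
    push_cast; ring
  · rw [show (6 * k + 1 + 3) ^ 2 + 3 = 12 * (3 * k ^ 2 + 4 * k + 1) + 7 by ring,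
      Nat.mul_add_div (by norm_num)]
    rw [show 2 * Real.pi * ((1 : ℕ) : ℝ) / 3 = (Real.pi - Real.pi / 3) + (0 : ℤ) * (2 * Real.pi)
        by push_cast; ring,
      Real.cos_add_int_mul_two_pi, Real.cos_pi_sub, Real.cos_pi_div_three]
    push_cast; ring
  · rw [show (6 * k + 2 + 3) ^ 2 + 3 = 12 * (3 * k ^ 2 + 5 * k + 2) + 4 by ring,
      Nat.mul_add_div (by norm_num)]
    rw [show 2 * Real.pi * ((2 : ℕ) : ℝ) / 3 = -(Real.pi - Real.pi / 3) + (1 : ℤ) * (2 * Real.pi)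
        by push_cast; ring,
      Real.cos_add_int_mul_two_pi, Real.cos_neg, Real.cos_pi_sub, Real.cos_pi_div_three]
    push_cast; ring
  · rw [show (6 * k + 3 + 3) ^ 2 + 3 = 12 * (3 * k ^ 2 + 6 * k + 3) + 3 by ring,
      Nat.mul_add_div (by norm_num)]
    rw [show 2 * Real.pi * ((3 : ℕ) : ℝ) / 3 = 0 + (1 : ℤ) * (2 * Real.pi) by push_cast; ring,
      Real.cos_add_int_mul_two_pi, Real.cos_zero]
    push_cast; ring
  · rw [show (6 * k + 4 + 3) ^ 2 + 3 = 12 * (3 * k ^ 2 + 7 * k + 4) + 4 by ring,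
      Nat.mul_add_div (by norm_num)]
    rw [show 2 * Real.pi * ((4 : ℕ) : ℝ) / 3 = (Real.pi - Real.pi / 3) + (1 : ℤ) * (2 * Real.pi)
        by push_cast; ring,
      Real.cos_add_int_mul_two_pi, Real.cos_pi_sub, Real.cos_pi_div_three]
    push_cast; ring
  · rw [show (6 * k + 5 + 3) ^ 2 + 3 = 12 * (3 * k ^ 2 + 8 * k + 5) + 7 by ring,
      Nat.mul_add_div (by norm_num)]
    rw [show 2 * Real.pi * ((5 : ℕ) : ℝ) / 3 = -(Real.pi - Real.pi / 3) + (2 : ℤ) * (2 * Real.pi)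
        by push_cast; ring,
      Real.cos_add_int_mul_two_pi, Real.cos_neg, Real.cos_pi_sub, Real.cos_pi_div_three]
    push_cast; ring

lemma Sigma2_nat (t : ℕ) : (((t + 2) ^ 2 / 4 : ℕ) : ℝ) = Sigma2 t := by
  rw [Sigma2, cosnat]
  rcases Nat.even_or_odd t with ⟨k, hk⟩ | ⟨k, hk⟩
  · subst hk
    rw [show (k + k + 2) ^ 2 = 4 * ((k + 1) ^ 2) + 0 by ring, Nat.mul_add_div (by norm_num)]
    rw [show ((-1 : ℝ)) ^ (k + k) = 1 by rw [← two_mul, pow_mul]; norm_num]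
    push_cast; ring
  · subst hk
    rw [show (2 * k + 1 + 2) ^ 2 = 4 * (k ^ 2 + 3 * k + 2) + 1 by ring,
      Nat.mul_add_div (by norm_num)]
    rw [show ((-1 : ℝ)) ^ (2 * k + 1) = -1 by rw [pow_add, pow_mul]; norm_num]
    push_cast; ring

lemma key_id (n s : ℕ) :
    w3 s - Sigma2 ((s : ℝ) - n - 1) = w3 (3 * (n : ℝ) - s) - Sigma2 (2 * (n : ℝ) - s - 1) := by
  have e1 : Real.cos (Real.pi * ((s : ℝ) - n - 1)) = -((-1) ^ s * (-1) ^ n) := by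
    have h : Real.pi * ((s : ℝ) - n - 1) = Real.pi * s - Real.pi * ((n + 1 : ℕ) : ℝ) := by
      push_cast; ring
    rw [h, Real.cos_sub, cosnat, cosnat, sinnat, sinnat]
    rw [pow_succ]; ring
  have e2 : Real.cos (Real.pi * (3 * (n : ℝ) - s)) = (-1) ^ n * (-1) ^ s := by
    have h : Real.pi * (3 * (n : ℝ) - s) = Real.pi * ((3 * n : ℕ) : ℝ) - Real.pi * s := by
      push_cast; ring
    rw [h, Real.cos_sub, cosnat, cosnat, sinnat, sinnat]
    rw [show ((-1 : ℝ)) ^ (3 * n) = (-1) ^ n by rw [pow_mul]; norm_num]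
    ring
  have e3 : Real.cos (Real.pi * (2 * (n : ℝ) - s - 1)) = -(-1) ^ s := by
    have h : Real.pi * (2 * (n : ℝ) - s - 1)
        = Real.pi * ((2 * n : ℕ) : ℝ) - Real.pi * ((s + 1 : ℕ) : ℝ) := by push_cast; ring
    rw [h, Real.cos_sub, cosnat, cosnat, sinnat, sinnat]
    rw [show ((-1 : ℝ)) ^ (2 * n) = 1 by rw [pow_mul]; norm_num]
    rw [pow_succ]; ring
  have e4 : Real.cos (2 * Real.pi * (3 * (n : ℝ) - s) / 3) = Real.cos (2 * Real.pi * s / 3) := by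
    have h : 2 * Real.pi * (3 * (n : ℝ) - s) / 3
        = ((n : ℕ) : ℝ) * (2 * Real.pi) - 2 * Real.pi * s / 3 := by ring
    rw [h, Real.cos_nat_mul_two_pi_sub]
  simp only [w3, Sigma2]
  rw [e1, e2, e3, e4, cosnat s]
  ring

/-- the explicit three-chamber formula for `P_3^n(s)`. -/
theorem P3_explicit (n s : ℕ) (hs : s ≤ 3 * n) :
    (s ≤ n → (P 3 n s : ℝ) = w3 s) ∧
    (n ≤ s → s ≤ 2 * n →
      (P 3 n s : ℝ) = w3 (3 * (n : ℝ) - s) - Sigma2 (2 * (n : ℝ) - s - 1)) ∧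
    (2 * n ≤ s → (P 3 n s : ℝ) = w3 (3 * (n : ℝ) - s)) := by
  refine ⟨fun h => ?_, fun h1 h2 => ?_, fun h2 => ?_⟩
  · rw [P_eq, Q_low n s h, C23_closed]
    exact w3_nat s
  · rcases Nat.lt_or_ge n s with hlt | hge
    · have hq := Q_mid n s hlt h2
      have hP : (P 3 n s : ℝ) = ((Cpq 2 3 s : ℕ) : ℝ) - ((Cpq 1 2 (s - n - 1) : ℕ) : ℝ) := by
        rw [P_eq]
        have hc := congrArg (fun m : ℕ => (m : ℝ)) hq
        push_cast at hc
        linarith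
      rw [hP, C23_closed, C12_closed, w3_nat, Sigma2_nat]
      have harg : (((s - n - 1 : ℕ)) : ℝ) = (s : ℝ) - n - 1 := by
        have h3 : n + 1 ≤ s := hlt
        rw [show s - n - 1 = s - (n + 1) from by omega, Nat.cast_sub h3]
        push_cast; ring
      rw [harg]
      exact key_id n s
    · obtain rfl : n = s := le_antisymm h1 hge
      have hkey := key_id n n
      rw [show (n : ℝ) - n - 1 = -1 from by ring, Sigma2_neg_one, sub_zero] at hkey
      rw [P_eq, Q_low n n (le_refl n), C23_closed, w3_nat]
      exact hkey
  · have h3 : 3 * n - s ≤ n := by omega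
    rw [P_eq, Q_symm n s hs, Q_low n _ h3, C23_closed, w3_nat]
    congr 1
    rw [Nat.cast_sub hs]
    push_cast; ring
end

section
/- The central (maximal) coefficient of the Gaussian polynomial for m = 4 is given by: for every natural number n, P_4^n(2n) = (2n+5)³/288 + (2n+5)/32 + (3/16)·cos(πn) + (4/27)·cos(2πn/3) + (4/27)·sin(π(8n+1)/6). (Identity of real numbers, with the integer count cast to ℝ.) -/
open Finset

open Real

/-!
Adding the slack variable `x₀ = n - ∑ xᵢ`, a solution is a tuple `(x₀, …, x₄)` with
`∑ xᵢ = n` and `2x₀ + x₁ = x₃ + 2x₄ =: a`. Recording `a`, `m = x₀ + x₁` and `m' = x₃ + x₄`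
identifies `P 4 n (2n)` with the number `E n` of triples `(a, m, m')` with
`m, m' ≤ a ≤ 2m, 2m'` and `m + m' ≤ n`. The shift `(a, m, m') ↦ (a + 2, m + 1, m' + 1)` maps
these onto the triples for `n + 2` off the faces `a = m`, `a = m'`; each face is counted by the
pairs `(a, m)` with `m ≤ a ≤ 2m`, `a + m ≤ n + 2`, which obey a similar shift recurrence.
Together these give `E (n + 5) + E n = E (n + 3) + E (n + 2) + n + 5`. The closed form obeys the
same recurrence at every real argument, since `(S⁵ - S³ - S² + 1) = (S² - 1)(S³ - 1)` kills its
2- and 3-periodic parts, and the two sides agree for `n < 5`.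
-/

def balancedPairs (N : ℕ) : Finset (ℕ × ℕ) :=
  (range (N + 1) ×ˢ range (N + 1)).filter fun p => p.2 ≤ p.1 ∧ p.1 ≤ 2 * p.2 ∧ p.1 + p.2 ≤ N

def balancedTriples (n : ℕ) : Finset (ℕ × ℕ × ℕ) :=
  (range (n + 1) ×ˢ range (n + 1) ×ˢ range (n + 1)).filter fun p =>
    p.2.1 ≤ p.1 ∧ p.1 ≤ 2 * p.2.1 ∧ p.2.2 ≤ p.1 ∧ p.1 ≤ 2 * p.2.2 ∧ p.2.1 + p.2.2 ≤ n

@[simp]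
lemma mem_balancedPairs {N : ℕ} {p : ℕ × ℕ} :
    p ∈ balancedPairs N ↔ p.2 ≤ p.1 ∧ p.1 ≤ 2 * p.2 ∧ p.1 + p.2 ≤ N := by
  simp only [balancedPairs, mem_filter, mem_product, mem_range]; omega

@[simp]
lemma mem_balancedTriples {n : ℕ} {p : ℕ × ℕ × ℕ} :
    p ∈ balancedTriples n ↔
      p.2.1 ≤ p.1 ∧ p.1 ≤ 2 * p.2.1 ∧ p.2.2 ≤ p.1 ∧ p.1 ≤ 2 * p.2.2 ∧ p.2.1 + p.2.2 ≤ n := by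
  simp only [balancedTriples, mem_filter, mem_product, mem_range]; omega

lemma sum_fin_four_succ_mul (x : Fin 4 → ℕ) :
    ∑ i : Fin 4, ((i : ℕ) + 1) * x i = x 0 + 2 * x 1 + 3 * x 2 + 4 * x 3 := by
  simp [Fin.sum_univ_four]

lemma P_four_two_mul_eq_card (n : ℕ) : P 4 n (2 * n) = #(balancedTriples n) := by
  rw [P, ← Nat.card_eq_finsetCard]
  refine Nat.card_congr
    { toFun := fun x => ⟨(x.1 2 + 2 * x.1 3, n - x.1 1 - x.1 2 - x.1 3, x.1 2 + x.1 3), ?_⟩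
      invFun := fun p => ⟨![2 * p.1.2.1 - p.1.1, n - p.1.2.1 - p.1.2.2, 2 * p.1.2.2 - p.1.1,
        p.1.1 - p.1.2.2], ?_⟩
      left_inv := ?_
      right_inv := ?_ }
  · obtain ⟨x, hs, hn⟩ := x
    rw [sum_fin_four_succ_mul] at hs
    rw [Fin.sum_univ_four] at hn
    rw [mem_balancedTriples]
    dsimp only
    omega
  · obtain ⟨⟨a, m, m'⟩, hp⟩ := p
    rw [mem_balancedTriples] at hp
    dsimp only at hp ⊢
    rw [sum_fin_four_succ_mul, Fin.sum_univ_four]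
    simp only [Matrix.cons_val]
    omega
  · rintro ⟨x, hs, hn⟩
    rw [sum_fin_four_succ_mul] at hs
    rw [Fin.sum_univ_four] at hn
    ext i
    fin_cases i <;> simp only [Matrix.cons_val, Fin.zero_eta, Fin.mk_one, Fin.reduceFinMk] <;> omega
  · rintro ⟨⟨a, m, m'⟩, hp⟩
    rw [mem_balancedTriples] at hp
    dsimp only at hp
    ext <;> simp only [Matrix.cons_val] <;> omega

lemma card_balancedPairs_add_three (N : ℕ) :
    #(balancedPairs (N + 3)) = #(balancedPairs N) + ((N + 3) / 2 + 1) := by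
  set Q := balancedPairs (N + 3)
  have hshift : #(Q.filter fun p => p.2 ≠ p.1) = #(balancedPairs N) := by
    refine card_nbij' (fun p => (p.1 - 2, p.2 - 1)) (fun p => (p.1 + 2, p.2 + 1)) ?_ ?_ ?_ ?_ <;>
      intro p hp <;>
      simp only [Q, SetLike.mem_coe, mem_filter, mem_balancedPairs, Prod.ext_iff] at hp ⊢ <;>
      omega
  have hdiag : #(Q.filter fun p => p.2 = p.1) = (N + 3) / 2 + 1 := by
    rw [← card_range ((N + 3) / 2 + 1)]
    refine card_nbij' (fun p => p.1) (fun k => (k, k)) ?_ ?_ ?_ ?_ <;>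
      intro p hp <;>
      simp only [Q, SetLike.mem_coe, mem_filter, mem_range, mem_balancedPairs, Prod.ext_iff,
        and_true, true_and] at hp ⊢ <;>
      omega
  have hsplit := card_filter_add_card_filter_not (s := Q) fun p => p.2 = p.1
  simp only [← ne_eq] at hsplit
  omega

lemma card_balancedTriples_add_two (n : ℕ) :
    #(balancedTriples (n + 2)) + ((n + 2) / 2 + 1) =
      #(balancedTriples n) + 2 * #(balancedPairs (n + 2)) := by
  set T := balancedTriples (n + 2)
  have hshift : #(T.filter fun p => ¬(p.2.1 = p.1 ∨ p.2.2 = p.1)) = #(balancedTriples n) := by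
    refine card_nbij' (fun p => (p.1 - 2, p.2.1 - 1, p.2.2 - 1))
      (fun p => (p.1 + 2, p.2.1 + 1, p.2.2 + 1)) ?_ ?_ ?_ ?_ <;>
      intro p hp <;>
      simp only [T, SetLike.mem_coe, mem_filter, mem_balancedTriples, Prod.ext_iff] at hp ⊢ <;>
      omega
  have hleft : #(T.filter fun p => p.2.1 = p.1) = #(balancedPairs (n + 2)) := by
    refine card_nbij' (fun p => (p.1, p.2.2)) (fun q => (q.1, q.1, q.2)) ?_ ?_ ?_ ?_ <;>
      intro p hp <;>
      simp only [T, SetLike.mem_coe, mem_filter, mem_balancedPairs, mem_balancedTriples,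
        Prod.ext_iff, and_true, true_and] at hp ⊢ <;>
      omega
  have hright : #(T.filter fun p => p.2.2 = p.1) = #(balancedPairs (n + 2)) := by
    refine card_nbij' (fun p => (p.1, p.2.1)) (fun q => (q.1, q.2, q.1)) ?_ ?_ ?_ ?_ <;>
      intro p hp <;>
      simp only [T, SetLike.mem_coe, mem_filter, mem_balancedPairs, mem_balancedTriples,
        Prod.ext_iff, and_true, true_and] at hp ⊢ <;>
      omega
  have hboth : #(T.filter fun p => p.2.1 = p.1 ∧ p.2.2 = p.1) = (n + 2) / 2 + 1 := by
    rw [← card_range ((n + 2) / 2 + 1)]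
    refine card_nbij' (fun p => p.1) (fun k => (k, k, k)) ?_ ?_ ?_ ?_ <;>
      intro p hp <;>
      simp only [T, SetLike.mem_coe, mem_filter, mem_range, mem_balancedTriples, Prod.ext_iff,
        and_true, true_and] at hp ⊢ <;>
      omega
  have hsplit := card_filter_add_card_filter_not (s := T) fun p => p.2.1 = p.1 ∨ p.2.2 = p.1
  have hincl := card_union_add_card_inter (T.filter fun p => p.2.1 = p.1)
    (T.filter fun p => p.2.2 = p.1)
  rw [← filter_or, ← filter_and] at hincl
  omega

lemma card_balancedTriples_add_five (n : ℕ) :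
    #(balancedTriples (n + 5)) + #(balancedTriples n) =
      #(balancedTriples (n + 3)) + #(balancedTriples (n + 2)) + (n + 5) := by
  have hT₃ := card_balancedTriples_add_two (n + 3)
  have hT₀ := card_balancedTriples_add_two n
  have hQ := card_balancedPairs_add_three (n + 2)
  simp only [add_assoc, Nat.reduceAdd] at hT₃ hQ
  omega

lemma eq_of_five_step_recurrence {M : Type*} [AddCancelCommMonoid M] {u v g : ℕ → M}
    (hu : ∀ n, u (n + 5) + u n = u (n + 3) + u (n + 2) + g n)
    (hv : ∀ n, v (n + 5) + v n = v (n + 3) + v (n + 2) + g n)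
    (hinit : ∀ n < 5, u n = v n) (n : ℕ) : u n = v n := by
  induction n using Nat.strong_induction_on with
  | _ n ih =>
    rcases Nat.lt_or_ge n 5 with hn | hn
    · exact hinit n hn
    obtain ⟨k, rfl⟩ := Nat.exists_eq_add_of_le' hn
    have hk := hu k
    rw [ih k (by omega), ih (k + 3) (by omega), ih (k + 2) (by omega), ← hv k] at hk
    exact add_right_cancel hk

lemma Function.Periodic.apply_add_add_apply {α β : Type*} [AddCommSemigroup α] [Add β]
    {f : α → β} {c : α} (hf : Function.Periodic f c) (x d e : α) (h : c + d = e) :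
    f (x + e) + f x = f (x + d) + f (x + c) := by
  rw [← h, add_comm c, ← add_assoc, hf, hf]

noncomputable def wave2 (x : ℝ) : ℝ := cos (π * x)

noncomputable def wave3 (x : ℝ) : ℝ := cos (2 * π * x / 3) + sin (π * (8 * x + 1) / 6)

lemma wave2_periodic : Function.Periodic wave2 2 := fun x => by
  rw [wave2, wave2, mul_add, mul_comm π 2, cos_add_two_pi]

lemma wave3_periodic : Function.Periodic wave3 3 := fun x => by
  have hc : 2 * π * (x + 3) / 3 = 2 * π * x / 3 + 2 * π := by ring
  have hs : π * (8 * (x + 3) + 1) / 6 = π * (8 * x + 1) / 6 + (2 : ℕ) * (2 * π) := by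
    push_cast; ring
  rw [wave3, wave3, hc, hs, cos_add_two_pi, sin_add_nat_mul_two_pi]

lemma wave2_natCast (n : ℕ) : wave2 n = (-1) ^ n := by
  rw [wave2, mul_comm, cos_nat_mul_pi]

lemma wave3_zero : wave3 0 = 3 / 2 := by norm_num [wave3, sin_pi_div_six]

lemma wave3_one : wave3 1 = -3 / 2 := by
  have hc : 2 * π * 1 / 3 = π - π / 3 := by ring
  have hs : π * (8 * 1 + 1) / 6 = π / 2 + π := by ring
  rw [wave3, hc, hs, cos_pi_sub, cos_pi_div_three, sin_add_pi, sin_pi_div_two]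
  norm_num

lemma wave3_two : wave3 2 = 0 := by
  have hc : 2 * π * 2 / 3 = π / 3 + π := by ring
  have hs : π * (8 * 2 + 1) / 6 = (π - π / 6) + 2 * π := by ring
  rw [wave3, hc, hs, cos_add_pi, cos_pi_div_three, sin_add_two_pi, sin_pi_sub, sin_pi_div_six]
  norm_num

noncomputable def centralCoeffFormula (x : ℝ) : ℝ :=
  (2 * x + 5) ^ 3 / 288 + (2 * x + 5) / 32 + 3 / 16 * wave2 x + 4 / 27 * wave3 x

lemma centralCoeffFormula_add_five (x : ℝ) :
    centralCoeffFormula (x + 5) + centralCoeffFormula x =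
      centralCoeffFormula (x + 3) + centralCoeffFormula (x + 2) + (x + 5) := by
  have h2 := wave2_periodic.apply_add_add_apply x 3 5 (by norm_num)
  have h3 := wave3_periodic.apply_add_add_apply x 2 5 (by norm_num)
  simp only [centralCoeffFormula]
  linear_combination 3 / 16 * h2 + 4 / 27 * h3

lemma centralCoeffFormula_eq_card_of_lt_five (n : ℕ) (hn : n < 5) :
    centralCoeffFormula n = #(balancedTriples n) := by
  have w3_three : wave3 3 = 3 / 2 := wave3_periodic.eq.trans wave3_zero
  have w3_four : wave3 4 = -3 / 2 := by
    rw [show (4 : ℝ) = 1 + 3 by norm_num, wave3_periodic, wave3_one]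
  interval_cases n <;> rw [centralCoeffFormula, wave2_natCast]
  · rw [show #(balancedTriples 0) = 1 by decide]
    norm_num [wave3_zero]
  · rw [show #(balancedTriples 1) = 1 by decide]
    norm_num [wave3_one]
  · rw [show #(balancedTriples 2) = 3 by decide]
    norm_num [wave3_two]
  · rw [show #(balancedTriples 3) = 5 by decide]
    norm_num [w3_three]
  · rw [show #(balancedTriples 4) = 8 by decide]
    norm_num [w3_four]

/-- the maximal (central) coefficient of the Gaussian polynomial for `m = 4`. -/
theorem P4_max_coefficient (n : ℕ) :
    (P 4 n (2 * n) : ℝ) =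
      (2 * (n : ℝ) + 5) ^ 3 / 288 + (2 * (n : ℝ) + 5) / 32
        + (3 / 16) * Real.cos (Real.pi * n)
        + (4 / 27) * Real.cos (2 * Real.pi * n / 3)
        + (4 / 27) * Real.sin (Real.pi * (8 * (n : ℝ) + 1) / 6) := by
  have hcard : ∀ k, (#(balancedTriples k) : ℝ) = centralCoeffFormula k :=
    eq_of_five_step_recurrence (g := fun k => (k : ℝ) + 5)
      (fun k => by exact_mod_cast card_balancedTriples_add_five k)
      (fun k => by simpa using centralCoeffFormula_add_five k)
      (fun k hk => (centralCoeffFormula_eq_card_of_lt_five k hk).symm)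
  rw [P_four_two_mul_eq_card, hcard, centralCoeffFormula, wave2, wave3]
  ring
end
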